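/- Let P1 be a SPARQL graph pattern, P2 a BGP, and σ : V → V an injective renaming with σ(x) = x for all x ∈ var(P1) and σ(x) ∉ var(P1) ∪ var(P2) for all x ∈ var(P2) \ var(P1). Then for every RDF graph G, ⟦FE(P1, P2σ)⟧_G = ⟦FE(P1,P2)⟧_G and ⟦FNE(P1, P2σ)⟧_G = ⟦FNE(P1,P2)⟧_G, where P2σ is the BGP obtained from P2 by replacing every variable x by σ(x). That is, relabeling by fresh variables the variables of the FILTER (NOT) EXISTS argument that are not shared with the outer pattern does not change the evaluation. -/

import Mathlib

/-!
Formalization of SPARQL graph-pattern syntax and semantics, following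
Pérez et al. and the paper "SPARQL in N3".

* IRIs, blank nodes and literals are three pairwise disjoint infinite sets,
  packaged in the type `RTerm` (the set `T = I ∪ B ∪ L`).
* Variables form a further disjoint infinite set `Var`.
* A pattern term (`PTerm`) is an element of `T ∪ V`.
* A solution mapping is a partial function from variables to RDF terms,
  modeled as `Var → Option RTerm`.
-/

namespace SparqlN3

/-- RDF terms: IRIs, blank nodes, literals — three disjoint infinite sets. -/
inductive RTerm : Type
  | iri : ℕ → RTerm
  | bnode : ℕ → RTerm
  | lit : ℕ → RTerm
deriving DecidableEq

/-- Variables (an infinite set, disjoint from `RTerm` by typing). -/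
abbrev Var : Type := ℕ

/-- Elements of `T ∪ V`. -/
abbrev PTerm : Type := RTerm ⊕ Var

/-- Triple patterns: elements of `(T ∪ V) × (T ∪ V) × (T ∪ V)`. -/
abbrev TriplePat : Type := PTerm × PTerm × PTerm

/-- Ground RDF triples. -/
abbrev Triple : Type := RTerm × RTerm × RTerm

/-- An RDF graph: a set of triples. -/
abbrev Graph : Type := Set Triple

/-- A basic graph pattern: a finite set of triple patterns. -/
abbrev BGP : Type := Finset TriplePat

/-- A (partial) mapping from variables to RDF terms. -/
abbrev Mapping : Type := Var → Option RTerm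

/-- The domain of a mapping. -/
def mdom (μ : Mapping) : Set Var := {x | μ x ≠ none}

/-- A solution mapping has a finite domain. -/
def FiniteDom (μ : Mapping) : Prop := (mdom μ).Finite

/-- Compatibility of two mappings: they agree on the common domain. -/
def compat (μ₁ μ₂ : Mapping) : Prop :=
  ∀ x a b, μ₁ x = some a → μ₂ x = some b → a = b

/-- Union `μ₁ ∪ μ₂` of two (compatible) mappings. -/
def munion (μ₁ μ₂ : Mapping) : Mapping :=
  fun x => (μ₁ x).elim (μ₂ x) some

def varsPT : PTerm → Finset Var
  | .inl _ => ∅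
  | .inr v => {v}

/-- Variables of a triple pattern. -/
def varsTP (t : TriplePat) : Finset Var :=
  varsPT t.1 ∪ varsPT t.2.1 ∪ varsPT t.2.2

/-- Variables of a BGP. -/
def varsBGP (P : BGP) : Finset Var := P.biUnion varsTP

/-- Substitution on a pattern term: replace variables in the domain of `μ`. -/
def substPT (μ : Mapping) : PTerm → PTerm
  | .inl t => .inl t
  | .inr v => (μ v).elim (.inr v) .inl

/-- Substitution `tμ` on a triple pattern (componentwise). -/
def substTP (μ : Mapping) (t : TriplePat) : TriplePat :=
  (substPT μ t.1, substPT μ t.2.1, substPT μ t.2.2)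

/-- Substitution `Pμ` on a BGP (literal replacement of variables in `dom μ`). -/
def substBGP (μ : Mapping) (P : BGP) : BGP := P.image (substTP μ)

/-- View a ground triple as a triple pattern. -/
def toPat (t : Triple) : TriplePat := (.inl t.1, .inl t.2.1, .inl t.2.2)

/-- `InstIn G μ P` : the instantiation `Pμ` is contained in `G`
(every triple pattern of `P` becomes, under `μ`, a ground triple of `G`). -/
def InstIn (G : Graph) (μ : Mapping) (P : BGP) : Prop :=
  ∀ tp ∈ P, ∃ t ∈ G, substTP μ tp = toPat t

/-- Evaluation of a BGP: `⟦P⟧_G = {μ | dom(μ) = var(P) ∧ Pμ ⊆ G}`. -/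
def bgpEval (G : Graph) (P : BGP) : Set Mapping :=
  {μ | mdom μ = ↑(varsBGP P) ∧ InstIn G μ P}

/-- SPARQL graph patterns.  Filter conditions are modeled as predicates
on solution mappings. -/
inductive GP : Type
  | bgp : BGP → GP
  | and : GP → GP → GP
  | union : GP → GP → GP
  | minus : GP → GP → GP
  | fe : GP → GP → GP
  | fne : GP → GP → GP
  | filter : GP → (Mapping → Prop) → GP
  | opt : GP → GP → (Mapping → Prop) → GP

/-- Substitution `Pμ` on a graph pattern, applied componentwise to triple
patterns and recursively through the constructors; for filters, the
predicate is composed with `μ`. -/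
def substGP (μ : Mapping) : GP → GP
  | .bgp P => .bgp (substBGP μ P)
  | .and P₁ P₂ => .and (substGP μ P₁) (substGP μ P₂)
  | .union P₁ P₂ => .union (substGP μ P₁) (substGP μ P₂)
  | .minus P₁ P₂ => .minus (substGP μ P₁) (substGP μ P₂)
  | .fe P₁ P₂ => .fe (substGP μ P₁) (substGP μ P₂)
  | .fne P₁ P₂ => .fne (substGP μ P₁) (substGP μ P₂)
  | .filter P R => .filter (substGP μ P) (fun ν => R (munion μ ν))
  | .opt P₁ P₂ R => .opt (substGP μ P₁) (substGP μ P₂) (fun ν => R (munion μ ν))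

/-- Structural depth (used as termination measure for `eval`). -/
def depth : GP → ℕ
  | .bgp _ => 0
  | .and P₁ P₂ => max (depth P₁) (depth P₂) + 1
  | .union P₁ P₂ => max (depth P₁) (depth P₂) + 1
  | .minus P₁ P₂ => max (depth P₁) (depth P₂) + 1
  | .fe P₁ P₂ => max (depth P₁) (depth P₂) + 1
  | .fne P₁ P₂ => max (depth P₁) (depth P₂) + 1
  | .filter P _ => depth P + 1
  | .opt P₁ P₂ _ => max (depth P₁) (depth P₂) + 1

theorem depth_substGP (μ : Mapping) (P : GP) : depth (substGP μ P) = depth P := by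
  induction P <;> simp [substGP, depth, *]

/-- The scope `sv` of a graph pattern. -/
def sv : GP → Finset Var
  | .bgp P => varsBGP P
  | .and P₁ P₂ => sv P₁ ∪ sv P₂
  | .union P₁ P₂ => sv P₁ ∪ sv P₂
  | .minus P₁ _ => sv P₁
  | .fe P₁ _ => sv P₁
  | .fne P₁ _ => sv P₁
  | .filter P _ => sv P
  | .opt P₁ P₂ _ => sv P₁ ∪ sv P₂

/-- The variables `var(P)` occurring in a graph pattern. -/
def varsGP : GP → Finset Var
  | .bgp P => varsBGP P
  | .and P₁ P₂ => varsGP P₁ ∪ varsGP P₂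
  | .union P₁ P₂ => varsGP P₁ ∪ varsGP P₂
  | .minus P₁ P₂ => varsGP P₁ ∪ varsGP P₂
  | .fe P₁ P₂ => varsGP P₁ ∪ varsGP P₂
  | .fne P₁ P₂ => varsGP P₁ ∪ varsGP P₂
  | .filter P _ => varsGP P
  | .opt P₁ P₂ _ => varsGP P₁ ∪ varsGP P₂

/-- Evaluation `⟦P⟧_G` of SPARQL graph patterns over an RDF graph `G`. -/
def eval (G : Graph) : GP → Set Mapping
  | .bgp P => bgpEval G P
  | .and P₁ P₂ =>
      {μ | ∃ μ₁ ∈ eval G P₁, ∃ μ₂ ∈ eval G P₂, compat μ₁ μ₂ ∧ μ = munion μ₁ μ₂}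
  | .union P₁ P₂ => eval G P₁ ∪ eval G P₂
  | .minus P₁ P₂ =>
      {μ ∈ eval G P₁ | ∀ μ' ∈ eval G P₂, ¬ compat μ μ' ∨ mdom μ ∩ mdom μ' = ∅}
  | .fe P₁ P₂ =>
      {μ ∈ eval G P₁ | (eval G (substGP μ P₂)).Nonempty}
  | .fne P₁ P₂ =>
      {μ ∈ eval G P₁ | eval G (substGP μ P₂) = ∅}
  | .filter P R => {μ ∈ eval G P | R μ}
  | .opt P₁ P₂ R =>
      {μ | ∃ μ₁ ∈ eval G P₁, ∃ μ₂ ∈ eval G P₂,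
          compat μ₁ μ₂ ∧ R (munion μ₁ μ₂) ∧ μ = munion μ₁ μ₂}
        ∪ {μ₁ ∈ eval G P₁ | ¬ ∃ μ₂ ∈ eval G P₂, compat μ₁ μ₂ ∧ R (munion μ₁ μ₂)}
termination_by P => depth P
decreasing_by all_goals (simp [depth_substGP, depth]; try omega)

/-- A pattern contains no UNION and no OPT subpattern. -/
def NoUnionOpt : GP → Prop
  | .bgp _ => True
  | .and P₁ P₂ => NoUnionOpt P₁ ∧ NoUnionOpt P₂
  | .union _ _ => False
  | .minus P₁ P₂ => NoUnionOpt P₁ ∧ NoUnionOpt P₂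
  | .fe P₁ P₂ => NoUnionOpt P₁ ∧ NoUnionOpt P₂
  | .fne P₁ P₂ => NoUnionOpt P₁ ∧ NoUnionOpt P₂
  | .filter P _ => NoUnionOpt P
  | .opt _ _ _ => False

/-- Renaming of variables in a pattern term. -/
def renamePT (σ : Var → Var) : PTerm → PTerm
  | .inl t => .inl t
  | .inr v => .inr (σ v)

/-- Renaming of variables in a triple pattern. -/
def renameTP (σ : Var → Var) (t : TriplePat) : TriplePat :=
  (renamePT σ t.1, renamePT σ t.2.1, renamePT σ t.2.2)

/-- Renaming `Qσ` of variables in a BGP. -/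
def renameBGP (σ : Var → Var) (P : BGP) : BGP := P.image (renameTP σ)

/-- Restriction of a mapping to a set of variables. -/
def restrict (μ : Mapping) (S : Finset Var) : Mapping :=
  fun x => if x ∈ S then μ x else none

/-!
A solution `μ` of `P₁` binds only variables of `P₁`. Since `(P₂σ)μ = (P₂(μ ∘ σ))σ` and
`σ` either fixes a variable of `P₂` or sends it outside `var(P₁)`, `μ ∘ σ` and `μ` agree on
`var(P₂)`, so `(P₂σ)μ = (P₂μ)σ`. Finally an injective renaming does not affect whether a BGP
has a solution: `ν` instantiates `Qσ` inside `G` iff `ν ∘ σ` instantiates `Q`, and, `σ` being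
injective, every mapping is of the form `ν ∘ σ`.
-/

theorem eval_bgp (G : Graph) (Q : BGP) : eval G (.bgp Q) = bgpEval G Q := by rw [eval]

theorem eval_fe (G : Graph) (P₁ P₂ : GP) :
    eval G (.fe P₁ P₂) = {μ ∈ eval G P₁ | (eval G (substGP μ P₂)).Nonempty} := by rw [eval]

theorem eval_fne (G : Graph) (P₁ P₂ : GP) :
    eval G (.fne P₁ P₂) = {μ ∈ eval G P₁ | eval G (substGP μ P₂) = ∅} := by rw [eval]

theorem mdom_munion (μ₁ μ₂ : Mapping) : mdom (munion μ₁ μ₂) = mdom μ₁ ∪ mdom μ₂ := by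
  ext x
  simp only [mdom, munion, Set.mem_ofPred_eq, Set.mem_union]
  cases μ₁ x <;> simp

theorem mdom_subset_varsGP {G : Graph} {P : GP} {μ : Mapping} (hμ : μ ∈ eval G P) :
    mdom μ ⊆ varsGP P := by
  induction P generalizing μ with
  | bgp Q => rw [eval_bgp] at hμ; rw [hμ.1]; rfl
  | and P₁ P₂ ih₁ ih₂ =>
    rw [eval] at hμ
    obtain ⟨μ₁, h₁, μ₂, h₂, -, rfl⟩ := hμ
    rw [mdom_munion, varsGP, Finset.coe_union]
    exact Set.union_subset_union (ih₁ h₁) (ih₂ h₂)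
  | union P₁ P₂ ih₁ ih₂ =>
    rw [eval] at hμ
    rw [varsGP, Finset.coe_union]
    rcases hμ with h | h
    · exact (ih₁ h).trans Set.subset_union_left
    · exact (ih₂ h).trans Set.subset_union_right
  | minus P₁ P₂ ih₁ _ | fe P₁ P₂ ih₁ _ | fne P₁ P₂ ih₁ _ =>
    rw [eval] at hμ
    rw [varsGP, Finset.coe_union]
    exact (ih₁ hμ.1).trans Set.subset_union_left
  | filter P R ih =>
    rw [eval] at hμ
    exact ih hμ.1
  | opt P₁ P₂ R ih₁ ih₂ =>
    rw [eval] at hμ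
    rw [varsGP, Finset.coe_union]
    rcases hμ with ⟨μ₁, h₁, μ₂, h₂, -, -, rfl⟩ | ⟨h₁, -⟩
    · rw [mdom_munion]
      exact Set.union_subset_union (ih₁ h₁) (ih₂ h₂)
    · exact (ih₁ h₁).trans Set.subset_union_left

theorem eq_none_of_mem_eval_of_notMem_varsGP {G : Graph} {P : GP} {μ : Mapping}
    (hμ : μ ∈ eval G P) {x : Var} (hx : x ∉ varsGP P) : μ x = none :=
  not_not.mp fun h => hx (mdom_subset_varsGP hμ h)

theorem substPT_congr {μ ν : Mapping} {p : PTerm} (h : ∀ v ∈ varsPT p, μ v = ν v) :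
    substPT μ p = substPT ν p := by
  cases p with
  | inl t => rfl
  | inr v => simp [substPT, h v (by simp [varsPT])]

theorem substTP_congr {μ ν : Mapping} {tp : TriplePat} (h : ∀ v ∈ varsTP tp, μ v = ν v) :
    substTP μ tp = substTP ν tp := by
  simp only [varsTP, Finset.mem_union, or_imp, forall_and] at h
  simp only [substTP, substPT_congr h.1.1, substPT_congr h.1.2, substPT_congr h.2]

theorem varsTP_subset_varsBGP {P : BGP} {tp : TriplePat} (h : tp ∈ P) :
    varsTP tp ⊆ varsBGP P :=
  Finset.subset_biUnion_of_mem varsTP h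

theorem substBGP_congr {μ ν : Mapping} {P : BGP} (h : ∀ v ∈ varsBGP P, μ v = ν v) :
    substBGP μ P = substBGP ν P :=
  Finset.image_congr fun _ htp => substTP_congr fun v hv => h v (varsTP_subset_varsBGP htp hv)

theorem instIn_congr {G : Graph} {μ ν : Mapping} {P : BGP} (h : ∀ v ∈ varsBGP P, μ v = ν v) :
    InstIn G μ P ↔ InstIn G ν P :=
  forall₂_congr fun _ htp => by
    rw [substTP_congr fun v hv => h v (varsTP_subset_varsBGP htp hv)]

theorem substPT_renamePT (μ : Mapping) (σ : Var → Var) (p : PTerm) :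
    substPT μ (renamePT σ p) = renamePT σ (substPT (μ ∘ σ) p) := by
  cases p with
  | inl t => rfl
  | inr v => cases h : μ (σ v) <;> simp [substPT, renamePT, h]

theorem substTP_renameTP (μ : Mapping) (σ : Var → Var) (tp : TriplePat) :
    substTP μ (renameTP σ tp) = renameTP σ (substTP (μ ∘ σ) tp) := by
  simp only [substTP, renameTP, substPT_renamePT]

theorem substBGP_renameBGP (μ : Mapping) (σ : Var → Var) (P : BGP) :
    substBGP μ (renameBGP σ P) = renameBGP σ (substBGP (μ ∘ σ) P) := by
  simp only [substBGP, renameBGP, Finset.image_image]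
  exact Finset.image_congr fun tp _ => substTP_renameTP μ σ tp

theorem renamePT_eq_inl_iff {σ : Var → Var} {p : PTerm} {a : RTerm} :
    renamePT σ p = .inl a ↔ p = .inl a := by
  cases p <;> simp [renamePT]

theorem renameTP_eq_toPat_iff {σ : Var → Var} {tp : TriplePat} {t : Triple} :
    renameTP σ tp = toPat t ↔ tp = toPat t := by
  simp only [renameTP, toPat, Prod.ext_iff, renamePT_eq_inl_iff]

theorem instIn_renameBGP {G : Graph} {μ : Mapping} {σ : Var → Var} {P : BGP} :
    InstIn G μ (renameBGP σ P) ↔ InstIn G (μ ∘ σ) P := by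
  simp only [InstIn, renameBGP, Finset.forall_mem_image, substTP_renameTP,
    renameTP_eq_toPat_iff]

theorem isSome_of_substPT_eq_inl {μ : Mapping} {p : PTerm} {a : RTerm}
    (h : substPT μ p = .inl a) {v : Var} (hv : v ∈ varsPT p) : (μ v).isSome := by
  cases p with
  | inl t => simp [varsPT] at hv
  | inr w =>
    obtain rfl : v = w := by simpa [varsPT] using hv
    cases hμ : μ v <;> simp_all [substPT]

theorem isSome_of_instIn {G : Graph} {μ : Mapping} {P : BGP} (hμ : InstIn G μ P) {v : Var}
    (hv : v ∈ varsBGP P) : (μ v).isSome := by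
  obtain ⟨tp, htp, hv⟩ := Finset.mem_biUnion.mp hv
  obtain ⟨t, -, ht⟩ := hμ tp htp
  simp only [substTP, toPat, Prod.ext_iff] at ht
  simp only [varsTP, Finset.mem_union] at hv
  rcases hv with (hv | hv) | hv
  · exact isSome_of_substPT_eq_inl ht.1 hv
  · exact isSome_of_substPT_eq_inl ht.2.1 hv
  · exact isSome_of_substPT_eq_inl ht.2.2 hv

theorem bgpEval_nonempty_iff {G : Graph} {P : BGP} :
    (bgpEval G P).Nonempty ↔ ∃ μ, InstIn G μ P := by
  refine ⟨fun ⟨μ, _, hμ⟩ => ⟨μ, hμ⟩, fun ⟨μ, hμ⟩ => ⟨restrict μ (varsBGP P), ?_, ?_⟩⟩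
  · ext v
    by_cases hv : v ∈ varsBGP P
    · simp [mdom, restrict, hv, Option.ne_none_iff_isSome, isSome_of_instIn hμ hv]
    · simp [mdom, restrict, hv]
  · exact (instIn_congr fun v hv => by simp [restrict, hv]).mpr hμ

theorem bgpEval_renameBGP_nonempty_iff {G : Graph} {σ : Var → Var}
    (hσ : Function.Injective σ) {P : BGP} :
    (bgpEval G (renameBGP σ P)).Nonempty ↔ (bgpEval G P).Nonempty := by
  simp only [bgpEval_nonempty_iff, instIn_renameBGP]
  refine ⟨fun ⟨μ, hμ⟩ => ⟨μ ∘ σ, hμ⟩, fun ⟨μ, hμ⟩ => ⟨μ ∘ Function.invFun σ, ?_⟩⟩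
  rwa [Function.comp_assoc, Function.invFun_comp hσ, Function.comp_id]

/-- Relabeling by fresh variables the variables of the argument of
FILTER (NOT) EXISTS that are not shared with the outer pattern does not change
the evaluation. -/
theorem fe_fne_relabel (P₁ : GP) (P₂ : BGP) (σ : Var → Var)
    (hσ : Function.Injective σ)
    (hfix : ∀ x ∈ varsGP P₁, σ x = x)
    (hfresh : ∀ x ∈ varsBGP P₂, x ∉ varsGP P₁ → σ x ∉ varsGP P₁ ∪ varsBGP P₂)
    (G : Graph) :
    eval G (.fe P₁ (.bgp (renameBGP σ P₂))) = eval G (.fe P₁ (.bgp P₂)) ∧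
    eval G (.fne P₁ (.bgp (renameBGP σ P₂))) = eval G (.fne P₁ (.bgp P₂)) := by
  have hnonempty : ∀ μ ∈ eval G P₁, (bgpEval G (substBGP μ (renameBGP σ P₂))).Nonempty ↔
      (bgpEval G (substBGP μ P₂)).Nonempty := by
    intro μ hμ
    have hagree : ∀ v ∈ varsBGP P₂, (μ ∘ σ) v = μ v := by
      intro v hv
      by_cases hv₁ : v ∈ varsGP P₁
      · rw [Function.comp_apply, hfix v hv₁]
      · have hσv : σ v ∉ varsGP P₁ := fun h => hfresh v hv hv₁ (Finset.mem_union_left _ h)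
        rw [Function.comp_apply, eq_none_of_mem_eval_of_notMem_varsGP hμ hσv,
          eq_none_of_mem_eval_of_notMem_varsGP hμ hv₁]
    rw [substBGP_renameBGP, substBGP_congr hagree, bgpEval_renameBGP_nonempty_iff hσ]
  simp only [eval_fe, eval_fne, substGP, eval_bgp, ← Set.not_nonempty_iff_eq_empty]
  exact ⟨Set.sep_ext_iff.mpr hnonempty, Set.sep_ext_iff.mpr fun μ hμ => not_congr (hnonempty μ hμ)⟩

end SparqlN3
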